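/- Let G be a finite simple graph on at least 4 vertices which does not have balanced components. Suppose G has a vertex v such that G - v has balanced components and deg(v) ≥ |V(G)|/2 - 1. Let A, B ⊆ V(G) with |A| ≥ (|V(G)| - 1)/2, |B| ≥ (|V(G)| - 1)/2, and v ∈ A. Then there is a path P in G starting at a vertex of A and ending at a vertex of B such that either P covers all vertices of G, or the maximum degree of the induced subgraph of G on V(G)\V(P) is at most (|V(G)\V(P)| - 1)/2. -/

import Mathlib

/-!
Write `G - v = X ⊔ Y` with no `X`–`Y` edges and `|X| ≤ |Y| ≤ |X| + 1`, and look for `P` made of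
an arm from `v` into one side and an arm from `v` into the other. Then `G - P` falls apart into
`X ∖ P` and `Y ∖ P`, so a vertex of `X ∖ P` has at most `|X ∖ P| - 1` neighbours in `G - P`, and
at most `|X| - 2` if no vertex of `X` is adjacent to all others (a hub): the degree condition only
asks the two arm lengths to be roughly balanced. Since `G` is not balanced, none of `{v} ∪ X`,
`{v} ∪ Y` (when `|X| = |Y|`) and `{v} ∪ N(v)` (when `B` misses `N[v]`) is closed; together with
the bounds on `deg v` and `|B|` this puts a vertex of `B` within distance two of `v`. When a side
has a hub, every vertex of that side can be reached from `v` by an arm of length at most three,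
which supplies the second arm, ending in `A` or in `B`, whenever the first one is too long.
-/

/-- `BalancedOn G S` : the induced subgraph of `G` on `S` has balanced components,
i.e. `S` can be partitioned into sets `X` and `Y` with no edges between them such that
`|X| = ⌊|S|/2⌋` and `|Y| = ⌈|S|/2⌉`. -/
def BalancedOn {V : Type*} (G : SimpleGraph V) (S : Set V) : Prop :=
  ∃ X Y : Set V, X ∪ Y = S ∧ Disjoint X Y ∧
    (∀ x ∈ X, ∀ y ∈ Y, ¬ G.Adj x y) ∧
    X.ncard = S.ncard / 2 ∧ Y.ncard = (S.ncard + 1) / 2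

theorem List.Nodup.ncard_setOf_mem {V : Type*} {l : List V} (hl : l.Nodup) :
    {u | u ∈ l}.ncard = l.length := by
  classical
  rw [← List.toFinset_card_of_nodup hl, ← Set.ncard_coe_finset]
  congr 1
  ext u
  simp only [Finset.mem_coe, List.mem_toFinset, Set.mem_ofPred_eq]

theorem Set.mem_of_subset_insert_of_ncard_le {V : Type*} [Finite V] {A Z : Set V} {v z : V}
    (hA : A ⊆ insert v Z) (hcard : Z.ncard + 1 ≤ A.ncard) (hz : z ∈ Z) : z ∈ A := by
  rw [Set.eq_of_subset_of_ncard_le hA ((Set.ncard_insert_le v Z).trans hcard)]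
  exact Set.mem_insert_of_mem v hz

theorem balancedOn_univ_of_closed {V : Type*} [Fintype V] {G : SimpleGraph V} {U : Set V}
    (hU : ∀ p ∈ U, ∀ q, G.Adj p q → q ∈ U) (hcard : U.ncard = (Fintype.card V + 1) / 2) :
    BalancedOn G Set.univ := by
  have hsum := Set.ncard_add_ncard_compl U
  rw [Nat.card_eq_fintype_card] at hsum
  refine ⟨Uᶜ, U, Set.compl_union_self U, disjoint_compl_left,
    fun x hx y hy hxy => hx (hU y hy x hxy.symm), ?_, ?_⟩ <;>
  rw [Set.ncard_univ, Nat.card_eq_fintype_card] <;> omega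

namespace SimpleGraph

variable {V : Type*} (G : SimpleGraph V)

def LowDegreeOutside (S : Set V) : Prop :=
  ∀ w, w ∉ S → 2 * {u | u ∉ S ∧ G.Adj w u}.ncard + 1 ≤ {u | u ∉ S}.ncard

def HasSparseRestPath (A B : Set V) : Prop :=
  ∃ a ∈ A, ∃ b ∈ B, ∃ P : G.Walk a b, P.IsPath ∧ G.LowDegreeOutside {u | u ∈ P.support}

def IsHub (Z : Set V) (h : V) : Prop :=
  h ∈ Z ∧ ∀ z ∈ Z, z ≠ h → G.Adj h z

def HasArm (Z : Set V) (v z : V) (k : ℕ) : Prop :=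
  ∃ p : G.Walk v z, p.IsPath ∧ p.length = k ∧ ∀ u ∈ p.support.tail, u ∈ Z

structure IsSplit (v : V) (X Y : Set V) : Prop where
  union_eq : X ∪ Y = {v}ᶜ
  disjoint : Disjoint X Y
  not_adj : ∀ x ∈ X, ∀ y ∈ Y, ¬ G.Adj x y

variable {G} {v a b w : V} {S X Y Z A B : Set V}

section Degree

variable [Finite V]

theorem ncard_adj_outside_add_one_le (hZ : ∀ u, G.Adj w u → u ∉ S → u ∈ Z) (hw : w ∈ Z)
    (hwS : w ∉ S) : {u | u ∉ S ∧ G.Adj w u}.ncard + 1 ≤ (Z \ S).ncard := by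
  have hsub : {u | u ∉ S ∧ G.Adj w u} ⊆ (Z \ S) \ {w} := fun u ⟨huS, hwu⟩ =>
    ⟨⟨hZ u hwu huS, huS⟩, (G.ne_of_adj hwu).symm⟩
  have hwZS : w ∈ Z \ S := ⟨hw, hwS⟩
  have hle := Set.ncard_le_ncard hsub
  rw [Set.ncard_sdiff_singleton_of_mem hwZS] at hle
  have hpos : 0 < (Z \ S).ncard := (Set.ncard_pos).2 ⟨w, hwZS⟩
  omega

theorem ncard_adj_outside_add_two_le (hZ : ∀ u, G.Adj w u → u ∉ S → u ∈ Z) (hw : w ∈ Z)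
    (hwZ : ¬ G.IsHub Z w) : {u | u ∉ S ∧ G.Adj w u}.ncard + 2 ≤ Z.ncard := by
  obtain ⟨z, hz, hzw, hwz⟩ : ∃ z ∈ Z, z ≠ w ∧ ¬ G.Adj w z := by
    simpa [IsHub, hw] using hwZ
  have hpair : {w, z} ⊆ Z := Set.insert_subset hw (Set.singleton_subset_iff.2 hz)
  have hsub : {u | u ∉ S ∧ G.Adj w u} ⊆ Z \ {w, z} := by
    rintro u ⟨huS, hwu⟩
    refine ⟨hZ u hwu huS, ?_⟩
    rintro (rfl | rfl)
    exacts [G.irrefl hwu, hwz hwu]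
  have h1 := Set.ncard_le_ncard hsub
  have h2 := Set.ncard_le_ncard hpair
  rw [Set.ncard_sdiff hpair, Set.ncard_pair hzw.symm] at h1
  rw [Set.ncard_pair hzw.symm] at h2
  omega

theorem exists_mem_not_adj_of_ncard_lt (h : (G.neighborSet v).ncard < Z.ncard) :
    ∃ z ∈ Z, ¬ G.Adj v z := by
  by_contra! hZ
  exact (Set.ncard_le_ncard (hZ : Z ⊆ G.neighborSet v)).not_gt h

end Degree

section Arms

theorem hasArm_zero (v : V) (Z : Set V) : G.HasArm Z v v 0 :=
  ⟨Walk.nil, Walk.IsPath.nil, rfl, by simp⟩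

theorem hasArm_one {u : V} (h : G.Adj v u) (hu : u ∈ Z) : G.HasArm Z v u 1 :=
  ⟨Walk.cons h Walk.nil, by simp [G.ne_of_adj h], rfl, by simpa using hu⟩

theorem hasArm_two (hvZ : v ∉ Z) {u : V} (h₁ : G.Adj v u) (h₂ : G.Adj u w) (hu : u ∈ Z)
    (hw : w ∈ Z) : G.HasArm Z v w 2 := by
  have hvw : v ≠ w := fun h => hvZ (h ▸ hw)
  exact ⟨Walk.cons h₁ (Walk.cons h₂ Walk.nil), by simp [G.ne_of_adj h₁, G.ne_of_adj h₂, hvw],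
    rfl, by simp [hu, hw]⟩

theorem hasArm_three (hvZ : v ∉ Z) {u g : V} (h₁ : G.Adj v u) (h₂ : G.Adj u g)
    (h₃ : G.Adj g w) (hu : u ∈ Z) (hg : g ∈ Z) (hw : w ∈ Z) (huw : u ≠ w) :
    G.HasArm Z v w 3 := by
  have hvg : v ≠ g := fun h => hvZ (h ▸ hg)
  have hvw : v ≠ w := fun h => hvZ (h ▸ hw)
  exact ⟨Walk.cons h₁ (Walk.cons h₂ (Walk.cons h₃ Walk.nil)),
    by simp [G.ne_of_adj h₁, G.ne_of_adj h₂, G.ne_of_adj h₃, hvg, hvw, huw], rfl,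
    by simp [hu, hg, hw]⟩

theorem IsHub.exists_hasArm (hvZ : v ∉ Z) {g u z : V} (hg : G.IsHub Z g) (hu : u ∈ Z)
    (hvu : G.Adj v u) (hz : z ∈ Z) : ∃ k, 1 ≤ k ∧ k ≤ 3 ∧ G.HasArm Z v z k := by
  by_cases hvz : G.Adj v z
  · exact ⟨1, le_rfl, by norm_num, hasArm_one hvz hz⟩
  by_cases hvg : G.Adj v g
  · have hzg : z ≠ g := by rintro rfl; exact hvz hvg
    exact ⟨2, by norm_num, by norm_num, hasArm_two hvZ hvg (hg.2 z hz hzg) hg.1 hz⟩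
  have hug : u ≠ g := by rintro rfl; exact hvg hvu
  by_cases hzg : z = g
  · subst hzg
    exact ⟨2, by norm_num, by norm_num, hasArm_two hvZ hvu (hg.2 u hu hug).symm hu hg.1⟩
  have huz : u ≠ z := by rintro rfl; exact hvz hvu
  exact ⟨3, by norm_num, le_rfl,
    hasArm_three hvZ hvu (hg.2 u hu hug).symm (hg.2 z hz hzg) hu hg.1 hz huz⟩

theorem IsHub.exists_hasArm_two (hvZ : v ∉ Z) {g u z : V} (hg : G.IsHub Z g) (hu : u ∈ Z)
    (hvu : G.Adj v u) (hz : z ∈ Z) (hvz : ¬ G.Adj v z) :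
    ∃ w ∈ Z, ¬ G.Adj v w ∧ G.HasArm Z v w 2 := by
  by_cases hvg : G.Adj v g
  · have hzg : z ≠ g := by rintro rfl; exact hvz hvg
    exact ⟨z, hz, hvz, hasArm_two hvZ hvg (hg.2 z hz hzg) hg.1 hz⟩
  · have hug : u ≠ g := by rintro rfl; exact hvg hvu
    exact ⟨g, hg.1, hvg, hasArm_two hvZ hvu (hg.2 u hu hug).symm hu hg.1⟩

theorem HasArm.mem {z : V} {k : ℕ} (h : G.HasArm Z v z k) (hk : k ≠ 0) : z ∈ Z := by
  obtain ⟨p, -, rfl, hpZ⟩ := h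
  exact hpZ z (Walk.end_mem_tail_support (Walk.length_eq_zero_iff.not.1 hk))

theorem ncard_sdiff_support_add_length [Finite V] (hvX : v ∉ X) (hXY : Disjoint X Y)
    {p : G.Walk v a} {q : G.Walk v b} (hp : p.IsPath) (hpX : ∀ u ∈ p.support.tail, u ∈ X)
    (hqY : ∀ u ∈ q.support.tail, u ∈ Y) :
    (X \ {u | u ∈ p.support ∨ u ∈ q.support}).ncard + p.length = X.ncard := by
  have hinter : X ∩ {u | u ∈ p.support ∨ u ∈ q.support} = {u | u ∈ p.support.tail} := by
    ext u
    simp only [Set.mem_inter_iff, Set.mem_ofPred_eq, p.mem_support_iff, q.mem_support_iff]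
    constructor
    · rintro ⟨huX, (rfl | hu) | (rfl | hu)⟩
      · exact absurd huX hvX
      · exact hu
      · exact absurd huX hvX
      · exact absurd (hqY u hu) (Set.disjoint_left.1 hXY huX)
    · exact fun hu => ⟨hpX u hu, Or.inl (Or.inr hu)⟩
  have hlen : p.support.tail.length = p.length := by simp
  rw [← Set.ncard_inter_add_ncard_sdiff_eq_ncard X {u | u ∈ p.support ∨ u ∈ q.support}, hinter,
    hp.support_nodup.tail.ncard_setOf_mem, hlen, add_comm]

theorem isPath_reverse_append (hXY : Disjoint X Y)
    {p : G.Walk v a} {q : G.Walk v b} (hp : p.IsPath) (hq : q.IsPath)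
    (hpX : ∀ u ∈ p.support.tail, u ∈ X) (hqY : ∀ u ∈ q.support.tail, u ∈ Y) :
    (p.reverse.append q).IsPath := by
  rw [Walk.isPath_def, Walk.support_append, Walk.support_reverse, List.nodup_append,
    List.nodup_reverse]
  refine ⟨hp.support_nodup, hq.support_nodup.tail, fun x hx y hy hxy => ?_⟩
  subst hxy
  rw [List.mem_reverse, p.mem_support_iff] at hx
  rcases hx with rfl | hx
  · have hnodup := hq.support_nodup
    rw [← q.cons_tail_support] at hnodup
    exact (List.nodup_cons.1 hnodup).1 hy
  · exact Set.disjoint_left.1 hXY (hpX x hx) (hqY x hy)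

end Arms

namespace IsSplit

theorem symm (hs : G.IsSplit v X Y) : G.IsSplit v Y X :=
  ⟨by rw [Set.union_comm, hs.union_eq], hs.disjoint.symm,
    fun y hy x hx hyx => hs.not_adj x hx y hy hyx.symm⟩

theorem notMem_left (hs : G.IsSplit v X Y) : v ∉ X := fun h =>
  (hs.union_eq ▸ Or.inl h : v ∈ ({v}ᶜ : Set V)) rfl

theorem mem_or_mem (hs : G.IsSplit v X Y) {u : V} (hu : u ≠ v) : u ∈ X ∨ u ∈ Y :=
  show u ∈ X ∪ Y from hs.union_eq ▸ hu

theorem mem_left_of_adj (hs : G.IsSplit v X Y) {x u : V} (hx : x ∈ X) (hxu : G.Adj x u)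
    (hu : u ≠ v) : u ∈ X :=
  (hs.mem_or_mem hu).resolve_right fun huY => hs.not_adj x hx u huY hxu

theorem subset_insert_left (hs : G.IsSplit v X Y) (hA : ∀ a ∈ A, a ∉ Y) : A ⊆ insert v X :=
  fun a ha => (eq_or_ne a v).imp id fun hav => (hs.mem_or_mem hav).resolve_right (hA a ha)

theorem hasArm_two_of_adj_adj (hs : G.IsSplit v X Y) {u b : V} (hvu : G.Adj v u)
    (hub : G.Adj u b) (hbv : b ≠ v) : G.HasArm X v b 2 ∨ G.HasArm Y v b 2 :=
  (hs.mem_or_mem (G.ne_of_adj hvu).symm).imp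
    (fun hu => hasArm_two hs.notMem_left hvu hub hu (hs.mem_left_of_adj hu hub hbv))
    (fun hu => hasArm_two hs.symm.notMem_left hvu hub hu (hs.symm.mem_left_of_adj hu hub hbv))

variable [Fintype V]

theorem ncard_add_ncard (hs : G.IsSplit v X Y) : X.ncard + Y.ncard + 1 = Fintype.card V := by
  rw [← Set.ncard_union_eq hs.disjoint, hs.union_eq, ← Nat.card_eq_fintype_card,
    ← Set.ncard_add_ncard_compl {v}, Set.ncard_singleton, add_comm]

theorem ncard_compl (hs : G.IsSplit v X Y) (hvS : v ∈ S) :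
    {u | u ∉ S}.ncard = (X \ S).ncard + (Y \ S).ncard := by
  rw [← Set.ncard_union_eq (hs.disjoint.mono Set.sdiff_subset Set.sdiff_subset)]
  congr 1
  ext u
  simp only [Set.mem_ofPred_eq, Set.mem_union, Set.mem_sdiff]
  refine ⟨fun huS => ?_, by rintro (⟨-, h⟩ | ⟨-, h⟩) <;> exact h⟩
  rcases hs.mem_or_mem (u := u) (by rintro rfl; exact huS hvS) with h | h
  exacts [Or.inl ⟨h, huS⟩, Or.inr ⟨h, huS⟩]

theorem two_mul_ncard_adj_outside_add_one_le (hs : G.IsSplit v X Y) (hvS : v ∈ S)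
    (hX : (X \ S).ncard ≤ (Y \ S).ncard + 1 ∨
      (∀ h, ¬ G.IsHub X h) ∧ 2 * X.ncard ≤ (X \ S).ncard + (Y \ S).ncard + 3)
    (hwX : w ∈ X) (hwS : w ∉ S) :
    2 * {u | u ∉ S ∧ G.Adj w u}.ncard + 1 ≤ {u | u ∉ S}.ncard := by
  have hZ : ∀ u, G.Adj w u → u ∉ S → u ∈ X := fun u hwu huS =>
    hs.mem_left_of_adj hwX hwu (by rintro rfl; exact huS hvS)
  rw [hs.ncard_compl hvS]
  rcases hX with hX | ⟨hnohub, hX⟩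
  · have := ncard_adj_outside_add_one_le hZ hwX hwS
    omega
  · have := ncard_adj_outside_add_two_le hZ hwX (hnohub w)
    omega

theorem lowDegreeOutside (hs : G.IsSplit v X Y) (hvS : v ∈ S)
    (hX : (X \ S).ncard ≤ (Y \ S).ncard + 1 ∨
      (∀ h, ¬ G.IsHub X h) ∧ 2 * X.ncard ≤ (X \ S).ncard + (Y \ S).ncard + 3)
    (hY : (Y \ S).ncard ≤ (X \ S).ncard + 1 ∨
      (∀ h, ¬ G.IsHub Y h) ∧ 2 * Y.ncard ≤ (Y \ S).ncard + (X \ S).ncard + 3) :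
    G.LowDegreeOutside S := by
  intro w hwS
  rcases hs.mem_or_mem (u := w) (by rintro rfl; exact hwS hvS) with hw | hw
  · exact hs.two_mul_ncard_adj_outside_add_one_le hvS hX hw hwS
  · exact hs.symm.two_mul_ncard_adj_outside_add_one_le hvS hY hw hwS

/-- The side conditions of `lowDegreeOutside`, read through `|X ∖ P| = |X| - i` and
`|Y ∖ P| = |Y| - j`. -/
theorem hasSparseRestPath_of_hasArm (hs : G.IsSplit v X Y) {i j : ℕ}
    (ha : a ∈ A) (hb : b ∈ B) (hpa : G.HasArm X v a i) (hqb : G.HasArm Y v b j)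
    (hX : X.ncard + j ≤ Y.ncard + i + 1 ∨
      (∀ h, ¬ G.IsHub X h) ∧ X.ncard + i + j ≤ Y.ncard + 3)
    (hY : Y.ncard + i ≤ X.ncard + j + 1 ∨
      (∀ h, ¬ G.IsHub Y h) ∧ Y.ncard + i + j ≤ X.ncard + 3) :
    G.HasSparseRestPath A B := by
  obtain ⟨p, hp, rfl, hpX⟩ := hpa
  obtain ⟨q, hq, rfl, hqY⟩ := hqb
  have hS : {u | u ∈ (p.reverse.append q).support} = {u | u ∈ p.support ∨ u ∈ q.support} := by
    ext u
    simp [Walk.mem_support_append_iff]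
  have hx := ncard_sdiff_support_add_length hs.notMem_left hs.disjoint hp hpX hqY
  have hy := ncard_sdiff_support_add_length hs.symm.notMem_left hs.disjoint.symm hq hqY hpX
  rw [Set.ext fun u => or_comm (a := u ∈ q.support)] at hy
  refine ⟨a, ha, b, hb, _, isPath_reverse_append hs.disjoint hp hq hpX hqY, ?_⟩
  rw [hS]
  exact hs.lowDegreeOutside (Or.inl p.start_mem_support)
    (hX.imp (fun _ => by omega) fun ⟨hf, _⟩ => ⟨hf, by omega⟩)
    (hY.imp (fun _ => by omega) fun ⟨hf, _⟩ => ⟨hf, by omega⟩)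

theorem balancedOn_univ (hs : G.IsSplit v X Y)
    (hxy : Y.ncard = X.ncard ∨ Y.ncard = X.ncard + 1) {U : Set V}
    (hU : ∀ p ∈ U, ∀ q, G.Adj p q → q ∈ U) (hcard : U.ncard = X.ncard + 1) :
    BalancedOn G Set.univ :=
  balancedOn_univ_of_closed hU (by have := hs.ncard_add_ncard; omega)

theorem exists_adj_right (hs : G.IsSplit v X Y)
    (hxy : Y.ncard = X.ncard ∨ Y.ncard = X.ncard + 1) (hbal : ¬ BalancedOn G Set.univ) :
    ∃ y ∈ Y, G.Adj v y := by
  by_contra! h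
  refine hbal (hs.balancedOn_univ hxy (U := insert v X) ?_
    (Set.ncard_insert_of_notMem hs.notMem_left))
  rintro p (rfl | hp) q hpq
  · exact Or.inr ((hs.mem_or_mem (G.ne_of_adj hpq).symm).resolve_right fun hq => h q hq hpq)
  · exact (eq_or_ne q v).imp id (hs.mem_left_of_adj hp hpq)

theorem exists_adj_left (hs : G.IsSplit v X Y) (hxy : Y.ncard = X.ncard)
    (hbal : ¬ BalancedOn G Set.univ) : ∃ x ∈ X, G.Adj v x :=
  hs.symm.exists_adj_right (Or.inl hxy.symm) hbal

theorem mem_of_not_adj (hs : G.IsSplit v X Y)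
    (hxy : Y.ncard = X.ncard ∨ Y.ncard = X.ncard + 1)
    (hdeg : Fintype.card V ≤ 2 * (G.neighborSet v).ncard + 2) (hB : Y.ncard ≤ B.ncard)
    (hvB : v ∉ B) (hBN : ∀ b ∈ B, ¬ G.Adj v b) :
    (∀ u, u ≠ v → ¬ G.Adj v u → u ∈ B) ∧ (G.neighborSet v).ncard = X.ncard := by
  have hsub : B ⊆ (insert v (G.neighborSet v))ᶜ := by
    rintro b hb (rfl | hvb)
    exacts [hvB hb, hBN b hb hvb]
  have hsum := Set.ncard_add_ncard_compl (insert v (G.neighborSet v))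
  rw [Nat.card_eq_fintype_card, Set.ncard_insert_of_notMem (G.notMem_neighborSet_self)] at hsum
  have hle := Set.ncard_le_ncard hsub
  have hn := hs.ncard_add_ncard
  have hBeq := Set.eq_of_subset_of_ncard_le hsub (by omega)
  refine ⟨fun u huv hvu => ?_, by omega⟩
  rw [hBeq]
  rintro (rfl | h)
  exacts [huv rfl, hvu h]

theorem exists_adj_adj (hs : G.IsSplit v X Y)
    (hxy : Y.ncard = X.ncard ∨ Y.ncard = X.ncard + 1) (hbal : ¬ BalancedOn G Set.univ)
    (hB : ∀ u, u ≠ v → ¬ G.Adj v u → u ∈ B) (hN : (G.neighborSet v).ncard = X.ncard) :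
    ∃ u, G.Adj v u ∧ ∃ b ∈ B, G.Adj u b := by
  by_contra! h
  refine hbal (hs.balancedOn_univ hxy (U := insert v (G.neighborSet v)) ?_
    (by rw [Set.ncard_insert_of_notMem G.notMem_neighborSet_self, hN]))
  rintro p (rfl | hvp) q hpq
  · exact Or.inr hpq
  · by_contra hq
    simp only [Set.mem_insert_iff, not_or, mem_neighborSet] at hq
    exact h p hvp q (hB q hq.1 hq.2) hpq

theorem hasSparseRestPath_of_adj_left (hs : G.IsSplit v X Y)
    (hxy : Y.ncard = X.ncard ∨ Y.ncard = X.ncard + 1) (hbal : ¬ BalancedOn G Set.univ)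
    (hA : Y.ncard ≤ A.ncard) (hB : Y.ncard ≤ B.ncard) (hvA : v ∈ A) (hvB : v ∉ B)
    (hb : b ∈ B) (hbX : b ∈ X) (hvb : G.Adj v b) : G.HasSparseRestPath A B := by
  by_cases hsingle : Y.ncard = X.ncard ∨ ∀ g, ¬ G.IsHub Y g
  · exact hs.symm.hasSparseRestPath_of_hasArm hvA hb (hasArm_zero v Y) (hasArm_one hvb hbX)
      (hsingle.imp (fun _ => by omega) fun h => ⟨h, by omega⟩) (Or.inl (by omega))
  obtain ⟨hxy, g, hg⟩ : Y.ncard = X.ncard + 1 ∧ ∃ g, G.IsHub Y g := by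
    push Not at hsingle
    exact ⟨hxy.resolve_left hsingle.1, hsingle.2⟩
  obtain ⟨y, hyY, hvy⟩ := hs.exists_adj_right (Or.inr hxy) hbal
  by_cases hAY : ∃ a ∈ A, a ∈ Y
  · obtain ⟨a, ha, haY⟩ := hAY
    obtain ⟨k, hk₁, hk₃, harm⟩ := hg.exists_hasArm hs.symm.notMem_left hyY hvy haY
    exact hs.symm.hasSparseRestPath_of_hasArm ha hb harm (hasArm_one hvb hbX)
      (Or.inl (by omega)) (Or.inl (by omega))
  push Not at hAY
  have hbA : b ∈ A :=
    Set.mem_of_subset_insert_of_ncard_le (hs.subset_insert_left hAY) (by omega) hbX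
  obtain ⟨c, hc, hcY⟩ : ∃ c ∈ B, c ∈ Y := by
    by_contra! hBY
    have hBX : B ⊆ X := fun c hc =>
      ((hs.subset_insert_left hBY) hc).resolve_left fun h => hvB (h ▸ hc)
    have := Set.ncard_le_ncard hBX
    omega
  obtain ⟨k, hk₁, hk₃, harm⟩ := hg.exists_hasArm hs.symm.notMem_left hyY hvy hcY
  exact hs.hasSparseRestPath_of_hasArm hbA hc (hasArm_one hvb hbX) harm
    (Or.inl (by omega)) (Or.inl (by omega))

theorem exists_hasArm_two_of_isHub (hs : G.IsSplit v X Y)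
    (hxy : Y.ncard = X.ncard ∨ Y.ncard = X.ncard + 1) (hbal : ¬ BalancedOn G Set.univ)
    (hB : ∀ u, u ≠ v → ¬ G.Adj v u → u ∈ B) (hN : (G.neighborSet v).ncard = X.ncard)
    {g : V} (hg : G.IsHub Y g) : ∃ b ∈ B, G.HasArm Y v b 2 := by
  obtain ⟨z, hzY, hvz⟩ : ∃ z ∈ Y, ¬ G.Adj v z := by
    rcases hxy with hxy | hxy
    · obtain ⟨x, hxX, hvx⟩ := hs.exists_adj_left hxy hbal
      obtain ⟨z, hz | hz, hvz⟩ := exists_mem_not_adj_of_ncard_lt (G := G) (v := v)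
        (Z := insert x Y) (by
          rw [Set.ncard_insert_of_notMem (Set.disjoint_left.1 hs.disjoint hxX)]
          omega)
      exacts [absurd (hz ▸ hvx) hvz, ⟨z, hz, hvz⟩]
    · exact exists_mem_not_adj_of_ncard_lt (by omega)
  obtain ⟨y, hyY, hvy⟩ := hs.exists_adj_right hxy hbal
  obtain ⟨w, hwY, hvw, harm⟩ := hg.exists_hasArm_two hs.symm.notMem_left hyY hvy hzY hvz
  exact ⟨w, hB w (ne_of_mem_of_not_mem hwY hs.symm.notMem_left) hvw, harm⟩

theorem hasSparseRestPath_of_hasArm_two_right (hs : G.IsSplit v X Y)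
    (hxy : Y.ncard = X.ncard ∨ Y.ncard = X.ncard + 1) (hbal : ¬ BalancedOn G Set.univ)
    (hA : Y.ncard ≤ A.ncard) (hvA : v ∈ A) (hBN : ∀ b ∈ B, ¬ G.Adj v b)
    (hB : ∀ u, u ≠ v → ¬ G.Adj v u → u ∈ B) (hN : (G.neighborSet v).ncard = X.ncard)
    (hb : b ∈ B) (harm : G.HasArm Y v b 2) : G.HasSparseRestPath A B := by
  by_cases hsingle : Y.ncard = X.ncard + 1 ∨ ∀ g, ¬ G.IsHub X g
  · exact hs.hasSparseRestPath_of_hasArm hvA hb (hasArm_zero v X) harm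
      (hsingle.imp (fun _ => by omega) fun h => ⟨h, by omega⟩) (Or.inl (by omega))
  obtain ⟨hxy, g, hg⟩ : Y.ncard = X.ncard ∧ ∃ g, G.IsHub X g := by
    push Not at hsingle
    exact ⟨hxy.resolve_right hsingle.1, hsingle.2⟩
  obtain ⟨x, hxX, hvx⟩ := hs.exists_adj_left hxy hbal
  by_cases hAX : ∃ a ∈ A, a ∈ X
  · obtain ⟨a, ha, haX⟩ := hAX
    obtain ⟨k, hk₁, hk₃, harmX⟩ := hg.exists_hasArm hs.notMem_left hxX hvx haX
    exact hs.hasSparseRestPath_of_hasArm ha hb harmX harm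
      (Or.inl (by omega)) (Or.inl (by omega))
  push Not at hAX
  obtain ⟨y, hyY, hvy⟩ := hs.exists_adj_right (Or.inl hxy) hbal
  obtain ⟨z, hzX, hvz⟩ : ∃ z ∈ X, ¬ G.Adj v z := by
    obtain ⟨z, hz | hz, hvz⟩ := exists_mem_not_adj_of_ncard_lt (G := G) (v := v)
      (Z := insert y X) (by
        rw [Set.ncard_insert_of_notMem (Set.disjoint_right.1 hs.disjoint hyY)]
        omega)
    exacts [absurd (hz ▸ hvy) hvz, ⟨z, hz, hvz⟩]
  obtain ⟨w, hwX, hvw, harmX⟩ := hg.exists_hasArm_two hs.notMem_left hxX hvx hzX hvz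
  have hw : w ∈ B := hB w (ne_of_mem_of_not_mem hwX hs.notMem_left) hvw
  by_cases hAY : ∃ a ∈ A, a ∈ Y ∧ G.Adj v a
  · obtain ⟨a, ha, haY, hva⟩ := hAY
    exact hs.symm.hasSparseRestPath_of_hasArm ha hw (hasArm_one hva haY) harmX
      (Or.inl (by omega)) (Or.inl (by omega))
  push Not at hAY
  have hsub : A ⊆ insert v (Y \ G.neighborSet v) := fun a ha =>
    (eq_or_ne a v).imp id fun hav =>
      have haY := (hs.mem_or_mem hav).resolve_left (hAX a ha)
      ⟨haY, hAY a ha haY⟩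
  have hcard : (Y \ G.neighborSet v).ncard + 1 ≤ A.ncard := by
    have hle := Set.ncard_le_ncard (Set.sdiff_subset_sdiff_right
      (Set.singleton_subset_iff.2 hvy) : Y \ G.neighborSet v ⊆ Y \ {y})
    rw [Set.ncard_sdiff_singleton_of_mem hyY] at hle
    have : 0 < Y.ncard := (Set.ncard_pos).2 ⟨y, hyY⟩
    omega
  have hbA : b ∈ A :=
    Set.mem_of_subset_insert_of_ncard_le hsub hcard ⟨harm.mem two_ne_zero, hBN b hb⟩
  exact hs.symm.hasSparseRestPath_of_hasArm hbA hw harm harmX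
    (Or.inl (by omega)) (Or.inl (by omega))

theorem hasSparseRestPath_of_forall_not_adj (hs : G.IsSplit v X Y)
    (hxy : Y.ncard = X.ncard ∨ Y.ncard = X.ncard + 1) (hbal : ¬ BalancedOn G Set.univ)
    (hdeg : Fintype.card V ≤ 2 * (G.neighborSet v).ncard + 2)
    (hA : Y.ncard ≤ A.ncard) (hB : Y.ncard ≤ B.ncard) (hvA : v ∈ A) (hvB : v ∉ B)
    (hBN : ∀ b ∈ B, ¬ G.Adj v b) : G.HasSparseRestPath A B := by
  obtain ⟨hBcompl, hN⟩ := hs.mem_of_not_adj hxy hdeg hB hvB hBN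
  by_cases hY : ∃ b ∈ B, G.HasArm Y v b 2
  · obtain ⟨b, hb, harm⟩ := hY
    exact hs.hasSparseRestPath_of_hasArm_two_right hxy hbal hA hvA hBN hBcompl hN hb harm
  have hnohub : ∀ g, ¬ G.IsHub Y g := fun g hg =>
    hY (hs.exists_hasArm_two_of_isHub hxy hbal hBcompl hN hg)
  obtain ⟨u, hvu, b, hb, hub⟩ := hs.exists_adj_adj hxy hbal hBcompl hN
  obtain harm | harm := hs.hasArm_two_of_adj_adj hvu hub (ne_of_mem_of_not_mem hb hvB)
  · exact hs.symm.hasSparseRestPath_of_hasArm hvA hb (hasArm_zero v Y) harm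
      (Or.inr ⟨hnohub, by omega⟩) (Or.inl (by omega))
  · exact absurd ⟨b, hb, harm⟩ hY

theorem hasSparseRestPath (hs : G.IsSplit v X Y)
    (hxy : Y.ncard = X.ncard ∨ Y.ncard = X.ncard + 1) (hbal : ¬ BalancedOn G Set.univ)
    (hdeg : Fintype.card V ≤ 2 * (G.neighborSet v).ncard + 2)
    (hA : Y.ncard ≤ A.ncard) (hB : Y.ncard ≤ B.ncard) (hvA : v ∈ A) :
    G.HasSparseRestPath A B := by
  by_cases hvB : v ∈ B
  · exact hs.hasSparseRestPath_of_hasArm hvA hvB (hasArm_zero v X) (hasArm_zero v Y)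
      (Or.inl (by omega)) (Or.inl (by omega))
  by_cases hBN : ∃ b ∈ B, G.Adj v b
  · obtain ⟨b, hb, hvb⟩ := hBN
    rcases hs.mem_or_mem (G.ne_of_adj hvb).symm with hbX | hbY
    · exact hs.hasSparseRestPath_of_adj_left hxy hbal hA hB hvA hvB hb hbX hvb
    · exact hs.hasSparseRestPath_of_hasArm hvA hb (hasArm_zero v X) (hasArm_one hvb hbY)
        (Or.inl (by omega)) (Or.inl (by omega))
  push Not at hBN
  exact hs.hasSparseRestPath_of_forall_not_adj hxy hbal hdeg hA hB hvA hvB hBN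

end IsSplit

end SimpleGraph

theorem statement7_general {V : Type*} [Fintype V] (G : SimpleGraph V)
    (hbal : ¬ BalancedOn G Set.univ)
    (v : V)
    (hbalv : BalancedOn G ({v}ᶜ))
    (hdeg : Fintype.card V ≤ 2 * {u | G.Adj v u}.ncard + 2)
    (A B : Set V)
    (hA : Fintype.card V ≤ 2 * A.ncard + 1)
    (hB : Fintype.card V ≤ 2 * B.ncard + 1)
    (hvA : v ∈ A) :
    ∃ a ∈ A, ∃ b ∈ B, ∃ p : G.Walk a b, p.IsPath ∧
      ((∀ x, x ∈ p.support) ∨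
        ∀ w, w ∉ p.support →
          2 * {u | u ∉ p.support ∧ G.Adj w u}.ncard + 1 ≤ {u | u ∉ p.support}.ncard) := by
  obtain ⟨X, Y, hun, hdisj, hXY, hX, hY⟩ := hbalv
  have hs : G.IsSplit v X Y := ⟨hun, hdisj, hXY⟩
  have hn := hs.ncard_add_ncard
  have hpath : G.HasSparseRestPath A B :=
    hs.hasSparseRestPath (by omega) hbal hdeg (by omega) (by omega) hvA
  obtain ⟨a, ha, b, hb, P, hP, hlow⟩ := hpath
  exact ⟨a, ha, b, hb, P, hP, Or.inr hlow⟩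

/-- Let `G` be a graph on at least `4` vertices without balanced components, with a
vertex `v` such that `G - v` has balanced components and `deg(v) ≥ |V(G)|/2 - 1`
(expressed as `|V(G)| ≤ 2·deg(v) + 2`). Let `A`, `B` be vertex sets with
`|A|, |B| ≥ (|V(G)| - 1)/2` and `v ∈ A`. Then there is a path from `A` to `B` such that
either it covers all vertices, or `Δ(G \ P) ≤ (|G \ P| - 1)/2`. -/
theorem statement7 {V : Type*} [Fintype V] (G : SimpleGraph V)
    (hcard : 4 ≤ Fintype.card V)
    (hbal : ¬ BalancedOn G Set.univ)
    (v : V)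
    (hbalv : BalancedOn G ({v}ᶜ))
    (hdeg : Fintype.card V ≤ 2 * {u | G.Adj v u}.ncard + 2)
    (A B : Set V)
    (hA : Fintype.card V ≤ 2 * A.ncard + 1)
    (hB : Fintype.card V ≤ 2 * B.ncard + 1)
    (hvA : v ∈ A) :
    ∃ a ∈ A, ∃ b ∈ B, ∃ p : G.Walk a b, p.IsPath ∧
      ((∀ x, x ∈ p.support) ∨
        ∀ w, w ∉ p.support →
          2 * {u | u ∉ p.support ∧ G.Adj w u}.ncard + 1 ≤ {u | u ∉ p.support}.ncard) :=
  statement7_general G hbal v hbalv hdeg A B hA hB hvA
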